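/- arXiv:math/0608508 — 8 statements merged into one kernel-verified Lean document; each statement's English description precedes it below -/
import Mathlib

section
/- Let l : ℤ → ℂ be a function satisfying (i) l(−n) = −l(n) for all n ∈ ℤ, (ii) l(1) = 0, and (iii) (n − 2)·l(n) = (n + 1)·l(n − 1) for all n ∈ ℤ. Then l(n) = ((n³ − n)/6)·l(2) for all n ∈ ℤ. -/
theorem stmt_0 (l : ℤ → ℂ)
    (h_odd : ∀ n : ℤ, l (-n) = - l n)
    (h_one : l 1 = 0)
    (h_rec : ∀ n : ℤ, ((n : ℂ) - 2) * l n = ((n : ℂ) + 1) * l (n - 1)) :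
    ∀ n : ℤ, l n = (((n : ℂ)^3 - (n : ℂ)) / 6) * l 2 := by
  have h0 : l 0 = 0 := by
    have := h_odd 0
    simp at this
    linear_combination this / 2
  have key : ∀ k : ℕ, l k = (((k : ℂ))^3 - (k : ℂ)) / 6 * l 2 := by
    intro k
    induction k with
    | zero => simpa using h0
    | succ m ih =>
      match m, ih with
      | 0, _ => simpa using h_one
      | 1, _ => norm_num
      | (m + 2), ih =>
        have hr := h_rec ((m : ℤ) + 3)
        have hne : ((m : ℂ) + 1) ≠ 0 := by
          have : (0 : ℝ) < (m : ℝ) + 1 := by positivity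
          intro h
          have := congrArg Complex.re h
          simp at this
          linarith
        push_cast at hr ih ⊢
        have h2 : ((m : ℤ) + 3 - 1) = ((m : ℤ) + 2) := by ring
        rw [h2] at hr
        rw [ih] at hr
        have goal : l ((m : ℤ) + 3) = (((m : ℂ) + 3)^3 - ((m : ℂ) + 3)) / 6 * l 2 := by
          have hmul : ((m : ℂ) + 1) * l ((m : ℤ) + 3)
              = ((m : ℂ) + 1) * ((((m : ℂ) + 3)^3 - ((m : ℂ) + 3)) / 6 * l 2) := by
            push_cast
            linear_combination hr
          exact mul_left_cancel₀ hne hmul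
        push_cast at goal
        convert goal using 2 <;> push_cast <;> ring
  intro n
  rcases le_or_gt (0 : ℤ) n with hn | hn
  · obtain ⟨k, rfl⟩ := Int.eq_ofNat_of_zero_le hn
    exact_mod_cast key k
  · obtain ⟨k, rfl⟩ : ∃ k : ℕ, n = -(k : ℤ) := by
      refine ⟨n.natAbs, ?_⟩
      omega
    have := h_odd (k : ℤ)
    rw [this, key k]
    push_cast
    ring
end

section
/- Let b⁺, b⁻ ∈ ℂ with b⁺ + b⁻ = 1, and let A : ℤ × ℤ → ℂ satisfy (i) A(k + i, j) = A(i, k + j) for all i, j, k ∈ ℤ, and (ii) (k − i − j)·A(i, j) = (−i + k·b⁻)·A(i + k, j) + (−j + k·b⁺)·A(i, k + j) for all i, j, k ∈ ℤ. Then A is constant, i.e. there exists d ∈ ℂ with A(i, j) = d for all i, j ∈ ℤ. -/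
/-!
Hypothesis (i) says that `A i j` depends only on `i + j`. Taking `i = 0`, `k = -j` in (ii), both
terms on the right become multiples of `A 0 0`, and since `b⁺ + b⁻ = 1` it collapses to
`-2j · A 0 j = -2j · A 0 0`; so `A 0 j = A 0 0` for `j ≠ 0`.
-/

theorem eq_apply_zero_add_of_shift {G α : Type*} [AddZeroClass G] {A : G → G → α}
    (h : ∀ i j k : G, A (k + i) j = A i (k + j)) (i j : G) : A i j = A 0 (i + j) := by
  simpa using h 0 j i

theorem apply_zero_eq_apply_zero_zero (bp bm : ℂ) (hb : bp + bm = 1) (A : ℤ → ℤ → ℂ)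
    (hsum : ∀ i j : ℤ, A i j = A 0 (i + j))
    (h2 : ∀ i j k : ℤ, ((k : ℂ) - (i : ℂ) - (j : ℂ)) * A i j
      = (-(i : ℂ) + (k : ℂ) * bm) * A (i + k) j + (-(j : ℂ) + (k : ℂ) * bp) * A i (k + j))
    (n : ℤ) : A 0 n = A 0 0 := by
  rcases eq_or_ne n 0 with rfl | hn
  · rfl
  have hcancel : (-2 * n : ℂ) ≠ 0 := by
    simpa using hn
  have hn' := h2 0 n (-n)
  rw [hsum (0 + -n) n, neg_add_cancel, zero_add, neg_add_cancel] at hn'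
  push_cast at hn'
  refine mul_left_cancel₀ hcancel ?_
  linear_combination hn' - (n : ℂ) * A 0 0 * hb

theorem stmt_1 (bp bm : ℂ) (hb : bp + bm = 1) (A : ℤ → ℤ → ℂ)
    (h1 : ∀ i j k : ℤ, A (k + i) j = A i (k + j))
    (h2 : ∀ i j k : ℤ, ((k : ℂ) - (i : ℂ) - (j : ℂ)) * A i j
      = (-(i : ℂ) + (k : ℂ) * bm) * A (i + k) j + (-(j : ℂ) + (k : ℂ) * bp) * A i (k + j)) :
    ∃ d : ℂ, ∀ i j : ℤ, A i j = d := by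
  have hsum := eq_apply_zero_add_of_shift h1
  refine ⟨A 0 0, fun i j => ?_⟩
  rw [hsum, apply_zero_eq_apply_zero_zero bp bm hb A hsum h2]
end

section
/- Let a, b, b′ ∈ ℂ and let A : ℤ × ℤ → ℂ satisfy (i/2 − j)·A(i + j, k) = (a − (k + j) + i·b′)·A(j, k) − (a − k + i·b)·A(j, i + k) for all i, j, k ∈ ℤ. If A(1, k) = 0 for all k ∈ ℤ, then A(i, k) = 0 for all i, k ∈ ℤ. -/
/-- The intertwining relation satisfied by the coefficients of the odd operators
`G^±_j` acting between two Virasoro intermediate-series modules `A_{a,b}` and `A_{a,b′}`. -/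
def IntertwiningRel (a b b' : ℂ) (A : ℤ → ℤ → ℂ) : Prop :=
  ∀ i j k : ℤ, ((i : ℂ) / 2 - (j : ℂ)) * A (i + j) k
    = (a - ((k : ℂ) + (j : ℂ)) + (i : ℂ) * b') * A j k
      - (a - (k : ℂ) + (i : ℂ) * b) * A j (i + k)

/-! A vanishing row `A j` forces the row `A (i + j)` to vanish unless `i = 2 j`; from `A 1 = 0`
this kills every row except `A 3`, and then `A 2 = 0` kills `A 3 = A (1 + 2)`. -/

theorem IntertwiningRel.apply_add_eq_zero {a b b' : ℂ} {A : ℤ → ℤ → ℂ}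
    (hA : IntertwiningRel a b b' A) {j : ℤ} (hj : ∀ k, A j k = 0) {i : ℤ}
    (hij : (i : ℂ) / 2 ≠ j) (k : ℤ) : A (i + j) k = 0 := by
  have h := hA i j k
  rw [hj, hj, mul_zero, mul_zero, sub_zero] at h
  exact (mul_eq_zero.mp h).resolve_left (sub_ne_zero.mpr hij)

theorem stmt_4 (a b b' : ℂ) (A : ℤ → ℤ → ℂ) (hA : IntertwiningRel a b b' A)
    (h1 : ∀ k : ℤ, A 1 k = 0) :
    ∀ i k : ℤ, A i k = 0 := by
  have h2 : ∀ k, A 2 k = 0 := hA.apply_add_eq_zero (i := 1) h1 (by norm_num)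
  intro m k
  by_cases hm : m = 3
  · subst hm
    exact hA.apply_add_eq_zero (i := 1) h2 (by norm_num) k
  · have hm' : ((m - 1 : ℤ) : ℂ) / 2 ≠ ((1 : ℤ) : ℂ) := by
      intro h
      apply hm
      exact_mod_cast (by push_cast at h; linear_combination 2 * h : (m : ℂ) = 3)
    simpa using hA.apply_add_eq_zero h1 hm' k
end

section
/- Let a, b ∈ ℂ, set b′ = b + 1/2, and let A : ℤ × ℤ → ℂ satisfy (i/2 − j)·A(i + j, k) = (a − (k + j) + i·b′)·A(j, k) − (a − k + i·b)·A(j, i + k) for all i, j, k ∈ ℤ. Then A is constant: there exists d ∈ ℂ with A(i, j) = d for all i, j ∈ ℤ. -/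
section Stmt6Aux

variable {a b : ℂ} {A : ℤ → ℤ → ℂ}

private lemma stmt6_odd_ne (n : ℤ) : (2*(n:ℂ) + 1) ≠ 0 := by
  intro h
  have h2 : ((2*n+1 : ℤ) : ℂ) = 0 := by push_cast; linear_combination h
  have h3 : (2*n+1 : ℤ) = 0 := by exact_mod_cast h2
  omega

private lemma stmt6_half_ne (j : ℤ) : (1/2 - (j:ℂ)) ≠ 0 := by
  intro h
  exact stmt6_odd_ne (j-1) (by push_cast; linear_combination (-2 : ℂ)*h)

private lemma stmt6_hR (hA : IntertwiningRel a b (b + 1/2) A) (i j k m n : ℤ)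
    (hm : m = i + j) (hn : n = i + k) :
    ((i : ℂ) / 2 - (j : ℂ)) * A m k
      = (a - ((k : ℂ) + (j : ℂ)) + (i : ℂ) * (b + 1/2)) * A j k
        - (a - (k : ℂ) + (i : ℂ) * b) * A j n := by
  subst hm hn; exact hA i j k

/-- `i = 1` instance. -/
private lemma stmt6_LA1 (hA : IntertwiningRel a b (b + 1/2) A) (j k : ℤ) :
    ((1:ℂ)/2 - (j:ℂ)) * (A (j+1) k - A j k) = (a - (k:ℂ) + b) * (A j k - A j (k+1)) := by
  have h := stmt6_hR hA 1 j k (j+1) (k+1) (by ring) (by ring)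
  push_cast at h
  linear_combination h

/-- Diagonal relation from `i = ±1`. -/
private lemma stmt6_LD (hA : IntertwiningRel a b (b + 1/2) A) (j k : ℤ) :
    ((3:ℂ)/2 + (j:ℂ)) * (a - (k:ℂ) + b) * (A j k - A j (k+1))
      = ((1:ℂ)/2 - (j:ℂ)) * (a - (k:ℂ) - b) * (A (j+1) k - A (j+1) (k-1)) := by
  have h1 := stmt6_hR hA 1 j k (j+1) (k+1) (by ring) (by ring)
  have h2 := stmt6_hR hA (-1) (j+1) k j (k-1) (by ring) (by ring)
  push_cast at h1 h2
  linear_combination (-(3/2 + (j:ℂ)))*h1 + (1/2 - (j:ℂ))*h2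

/-- Two-term relation along the second variable. -/
private lemma stmt6_LF (hA : IntertwiningRel a b (b + 1/2) A) (j k : ℤ) :
    (a - (k:ℂ) - 1 - b) * (a - (k:ℂ) - (j:ℂ) + b + 1/2) * (A j k - A j (k+1))
      = (a - (k:ℂ) - 1 + b) * (a - (k:ℂ) - (j:ℂ) - b - 5/2) * (A j (k+1) - A j (k+2)) := by
  have h1 := stmt6_hR hA 1 j k (j+1) (k+1) (by ring) (by ring)
  have h2 := stmt6_hR hA 1 j (k+1) (j+1) (k+2) (by ring) (by ring)
  have h3 := stmt6_hR hA (-1) (j+1) (k+1) j k (by ring) (by ring)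
  push_cast at h1 h2 h3
  linear_combination (-(a - (k:ℂ) - 1 - b))*h1 + ((a - (k:ℂ) - 1 - b) - (3/2 + (j:ℂ)))*h2
    + (1/2 - (j:ℂ))*h3

/-- `i = 2` instance. -/
private lemma stmt6_Lalt (hA : IntertwiningRel a b (b + 1/2) A) (j k : ℤ) :
    ((1:ℂ) - (j:ℂ)) * (A (j+2) k - A j k) = (a - (k:ℂ) + 2*b) * (A j k - A j (k+2)) := by
  have h := stmt6_hR hA 2 j k (j+2) (k+2) (by ring) (by ring)
  push_cast at h
  linear_combination h

/-- Second two-term relation along the second variable, from `i = 2` data. -/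
private lemma stmt6_LX (hA : IntertwiningRel a b (b + 1/2) A) (j k : ℤ) :
    ((-1/8) * (k:ℂ) + (1/2) * (k:ℂ) * (k:ℂ) + (5/4) * (j:ℂ) * (k:ℂ) + (-3/2) * (j:ℂ) * (k:ℂ) * (k:ℂ) + (-5/2) * (j:ℂ) * (j:ℂ) * (k:ℂ) + (1) * (j:ℂ) * (j:ℂ) * (k:ℂ) * (k:ℂ) + (1) * (j:ℂ) * (j:ℂ) * (j:ℂ) * (k:ℂ) + (1/4) * b + (-1) * b * (k:ℂ) + (-3/2) * b * (j:ℂ) + (3) * b * (j:ℂ) * (k:ℂ) + (2) * b * (j:ℂ) * (j:ℂ) + (-2) * b * (j:ℂ) * (j:ℂ) * (k:ℂ) + (1/2) * b * b + (-3/2) * b * b * (j:ℂ) + (1) * b * b * (j:ℂ) * (j:ℂ) + (1/8) * a + (-1) * a * (k:ℂ) + (-5/4) * a * (j:ℂ) + (3) * a * (j:ℂ) * (k:ℂ) + (5/2) * a * (j:ℂ) * (j:ℂ) + (-2) * a * (j:ℂ) * (j:ℂ) * (k:ℂ) + (-1) * a * (j:ℂ) * (j:ℂ) * (j:ℂ)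 + (1) * a * b + (-3) * a * b * (j:ℂ) + (2) * a * b * (j:ℂ) * (j:ℂ) + (1/2) * a * a + (-3/2) * a * a * (j:ℂ) + (1) * a * a * (j:ℂ) * (j:ℂ)) * (A j k - A j (k+1)) + ((-5/8) * (k:ℂ) + (-1/2) * (k:ℂ) * (k:ℂ) + (7/4) * (j:ℂ) * (k:ℂ) + (3/2) * (j:ℂ) * (k:ℂ) * (k:ℂ) + (-1/2) * (j:ℂ) * (j:ℂ) * (k:ℂ) + (-1) * (j:ℂ) * (j:ℂ) * (k:ℂ) * (k:ℂ) + (-1) * (j:ℂ) * (j:ℂ) * (j:ℂ) * (k:ℂ) + (3/4) * b + (1) * b * (k:ℂ) + (-2) * b * (j:ℂ) + (-3) * b * (j:ℂ) * (k:ℂ) + (2) * b * (j:ℂ) * (j:ℂ) * (k:ℂ) + (2) * b * (j:ℂ) * (j:ℂ) * (j:ℂ) + (-1/2) * b * b + (3/2) * b * b * (j:ℂ) + (-1) * b * b * (j:ℂ) * (j:ℂ) + (5/8) * a + (1) * a * (k:ℂ) + (-7/4) * a * (j:ℂ) + (-3) * a * (j:ℂ) * (k:ℂ) + (1/2) * a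 * (j:ℂ) * (j:ℂ) + (2) * a * (j:ℂ) * (j:ℂ) * (k:ℂ) + (1) * a * (j:ℂ) * (j:ℂ) * (j:ℂ) + (-1) * a * b + (3) * a * b * (j:ℂ) + (-2) * a * b * (j:ℂ) * (j:ℂ) + (-1/2) * a * a + (3/2) * a * a * (j:ℂ) + (-1) * a * a * (j:ℂ) * (j:ℂ)) * (A j (k+1) - A j (k+2)) = 0 := by
  have h2 := stmt6_hR hA 2 j k (j+2) (k+2) (by ring) (by ring)
  have hb := stmt6_hR hA 1 (j+1) k (j+2) (k+1) (by ring) (by ring)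
  have hc := stmt6_hR hA 1 j k (j+1) (k+1) (by ring) (by ring)
  have hd := stmt6_hR hA 1 j (k+1) (j+1) (k+2) (by ring) (by ring)
  push_cast at h2 hb hc hd
  linear_combination ((-1/8) + (1/4) * (j:ℂ) + (1/2) * (j:ℂ) * (j:ℂ) + (-1) * (j:ℂ) * (j:ℂ) * (j:ℂ)) * h2 + ((-1/4) + (5/4) * (j:ℂ) + (-2) * (j:ℂ) * (j:ℂ) + (1) * (j:ℂ) * (j:ℂ) * (j:ℂ)) * hb + ((1/4) + (1/2) * (k:ℂ) + (-1/4) * (j:ℂ) + (-3/2) * (j:ℂ) * (k:ℂ) + (-1) * (j:ℂ) * (j:ℂ) + (1) * (j:ℂ) * (j:ℂ) * (k:ℂ) + (1) * (j:ℂ) * (j:ℂ) * (j:ℂ) + (-1/2) * b + (3/2) * b * (j:ℂ) + (-1) * b * (j:ℂ) * (j:ℂ) + (-1/2) * a + (3/2) * a * (j:ℂ) + (-1) * a * (j:ℂ) * (j:ℂ)) * hc + ((-1/2) * (k:ℂ) + (3/2) * (j:ℂ) * (k:ℂ) + (-1) * (j:ℂ) * (j:ℂ) * (k:ℂ) + (1/2)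 * b + (-3/2) * b * (j:ℂ) + (1) * b * (j:ℂ) * (j:ℂ) + (1/2) * a + (-3/2) * a * (j:ℂ) + (1) * a * (j:ℂ) * (j:ℂ)) * hd

end Stmt6Aux

theorem stmt_6 (a b b' : ℂ) (hb' : b' = b + 1/2) (A : ℤ → ℤ → ℂ)
    (hA : IntertwiningRel a b b' A) :
    ∃ d : ℂ, ∀ i j : ℤ, A i j = d := by
  subst hb'
  -- step 0: a three-step alternation criterion for row 1
  have sigma3 : ∀ k : ℤ, A 1 (k+2) = A 1 k → A 1 (k+3) = A 1 (k+1) → A 1 (k+4) = A 1 (k+2) →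
      A 1 k = A 1 (k+1) := by
    intro k e0 e1 e2
    have hf0 := stmt6_LF hA 1 k
    have hf1 := stmt6_LF hA 1 (k+1)
    have hf2 := stmt6_LF hA 1 (k+2)
    rw [show k+1+1 = k+2 by ring, show k+1+2 = k+3 by ring] at hf1
    rw [show k+2+1 = k+3 by ring, show k+2+2 = k+4 by ring] at hf2
    push_cast at hf0 hf1 hf2
    linear_combination (1/4 : ℂ)*hf0 + (1/2 : ℂ)*hf1 + (1/4 : ℂ)*hf2
      + (-(a - (k:ℂ) - 1 + b)*(a - (k:ℂ) - b - 7/2)/4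
         + (2*(a-(k:ℂ)-1)^2 - 6*(a-(k:ℂ)-1) - 2*b^2 - 3*b + 4)/2
         - (2*(a-(k:ℂ)-2)^2 - 6*(a-(k:ℂ)-2) - 2*b^2 - 3*b + 4)/4) * e0
      + (-(a - (k:ℂ) - 2 + b)*(a - (k:ℂ) - 1 - b - 7/2)/2
         + (2*(a-(k:ℂ)-2)^2 - 6*(a-(k:ℂ)-2) - 2*b^2 - 3*b + 4)/4) * e1
      + (-(a - (k:ℂ) - 3 + b)*(a - (k:ℂ) - 2 - b - 7/2)/4) * e2
  -- step 1: row 1 is constant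
  have row1 : ∀ k : ℤ, A 1 k = A 1 (k+1) := by
    have haltgen : ∀ k : ℤ, (a - (k:ℂ) + 2*b) ≠ 0 → A 1 (k+2) = A 1 k := by
      intro k hnz
      have h := stmt6_Lalt hA 1 k
      push_cast at h
      have h0 : (a - (k:ℂ) + 2*b) * (A 1 k - A 1 (k+2)) = 0 := by linear_combination -h
      exact (sub_eq_zero.mp ((mul_eq_zero.mp h0).resolve_left hnz)).symm
    by_cases hex : ∃ n : ℤ, a + 2*b = (n:ℂ)
    · obtain ⟨n, hn⟩ := hex
      have halt : ∀ k : ℤ, k ≠ n → A 1 (k+2) = A 1 k := by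
        intro k hk
        refine haltgen k (fun hzero => hk ?_)
        have h2 : ((n - k : ℤ):ℂ) = 0 := by push_cast; linear_combination hzero - hn
        have h3 : (n - k : ℤ) = 0 := by exact_mod_cast h2
        omega
      have main : ∀ k : ℤ, k ≠ n - 2 → k ≠ n - 1 → k ≠ n → A 1 k = A 1 (k+1) := by
        intro k h1 h2 h3
        have e1 := halt (k+1) (by omega)
        have e2 := halt (k+2) (by omega)
        rw [show k+1+2 = k+3 by ring] at e1
        rw [show k+2+2 = k+4 by ring] at e2
        exact sigma3 k (halt k (by omega)) e1 e2
      have p2 : A 1 (n-2) = A 1 (n-1) := by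
        have hm := main (n-3) (by omega) (by omega) (by omega)
        have ha := halt (n-3) (by omega)
        rw [show n-3+1 = n-2 by ring] at hm
        rw [show n-3+2 = n-1 by ring] at ha
        exact hm.symm.trans ha.symm
      have p1 : A 1 (n-1) = A 1 n := by
        have ha := halt (n-2) (by omega)
        rw [show n-2+2 = n by ring] at ha
        exact (ha.trans p2).symm
      have p0 : A 1 n = A 1 (n+1) := by
        have ha := halt (n-1) (by omega)
        rw [show n-1+2 = n+1 by ring] at ha
        exact (ha.trans p1).symm
      intro k
      rcases eq_or_ne k (n-2) with hk|hk2
      · subst hk; rw [show n-2+1 = n-1 by ring]; exact p2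
      rcases eq_or_ne k (n-1) with hk|hk1
      · subst hk; rw [show n-1+1 = n by ring]; exact p1
      rcases eq_or_ne k n with hk|hk0
      · subst hk; exact p0
      · exact main k hk2 hk1 hk0
    · have halt : ∀ k : ℤ, A 1 (k+2) = A 1 k := by
        intro k
        exact haltgen k (fun hzero => hex ⟨k, by linear_combination hzero⟩)
      intro k
      have e1 := halt (k+1)
      have e2 := halt (k+2)
      rw [show k+1+2 = k+3 by ring] at e1
      rw [show k+2+2 = k+4 by ring] at e2
      exact sigma3 k (halt k) e1 e2
  -- step 2: going up one row
  have step_up : ∀ j : ℤ, (∀ k, A j k = A j (k+1)) → ∀ k, A (j+1) k = A (j+1) (k+1) := by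
    intro j hrow
    have most : ∀ k : ℤ, (a - ((k:ℂ)+1) - b) ≠ 0 → A (j+1) k = A (j+1) (k+1) := by
      intro k hnz
      have h := stmt6_LD hA j (k+1)
      rw [show k+1-1 = k by ring] at h
      push_cast at h
      have h0 : ((1:ℂ)/2 - (j:ℂ)) * ((a - ((k:ℂ)+1) - b) * (A (j+1) (k+1) - A (j+1) k)) = 0 := by
        linear_combination -h + ((3:ℂ)/2 + (j:ℂ))*(a - ((k:ℂ)+1) + b)*(hrow (k+1))
      have h1 := (mul_eq_zero.mp h0).resolve_left (stmt6_half_ne j)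
      exact (sub_eq_zero.mp ((mul_eq_zero.mp h1).resolve_left hnz)).symm
    by_cases hex : ∃ m : ℤ, a - b = (m:ℂ)
    · obtain ⟨m, hm⟩ := hex
      have most' : ∀ k : ℤ, k ≠ m - 1 → A (j+1) k = A (j+1) (k+1) := by
        intro k hk
        refine most k (fun hzero => hk ?_)
        have h2 : ((m - 1 - k : ℤ):ℂ) = 0 := by push_cast; linear_combination hzero - hm
        have h3 : (m - 1 - k : ℤ) = 0 := by exact_mod_cast h2
        omega
      intro k
      rcases eq_or_ne k (m-1) with hk|hk
      · rw [hk, show m-1+1 = m by ring]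
        have hnext : A (j+1) m = A (j+1) (m+1) := most' m (by omega)
        by_cases hb2 : b = -(1/2)
        · have hx := stmt6_LX hA (j+1) (m-1)
          rw [show m-1+1 = m by ring, show m-1+2 = m+1 by ring] at hx
          have ha2 : a = (m:ℂ) - 1/2 := by rw [hb2] at hm; linear_combination hm
          rw [ha2, hb2] at hx
          push_cast at hx
          have h0 : (-((2*(j:ℂ)+1)^2*(2*(j:ℂ)+3))/16) * (A (j+1) (m-1) - A (j+1) m) = 0 := by
            linear_combination hx + ((2*(j:ℂ)+1)^2*(2*(j:ℂ)+3)/16)*hnext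
          have hnz : (-((2*(j:ℂ)+1)^2*(2*(j:ℂ)+3))/16) ≠ 0 := by
            have o1 := stmt6_odd_ne j
            have o2 : (2*(j:ℂ)+3) ≠ 0 := fun h =>
              stmt6_odd_ne (j+1) (by push_cast; linear_combination h)
            exact fun h => (mul_ne_zero (pow_ne_zero 2 o1) o2) (by linear_combination (-16:ℂ)*h)
          exact sub_eq_zero.mp ((mul_eq_zero.mp h0).resolve_left hnz)
        · have hf := stmt6_LF hA (j+1) (m-2)
          rw [show m-2+1 = m-1 by ring, show m-2+2 = m by ring] at hf
          push_cast at hf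
          rw [show a = (m:ℂ) + b by linear_combination hm] at hf
          have hprev : A (j+1) (m-2) = A (j+1) (m-1) := by
            have h2 := most' (m-2) (by omega)
            rw [show m-2+1 = m-1 by ring] at h2
            exact h2
          have h0 : ((2*b+1) * ((j:ℂ) + 3/2)) * (A (j+1) (m-1) - A (j+1) m) = 0 := by
            linear_combination hf - (2*b - (j:ℂ) + 3/2)*hprev
          have hnz : (2*b+1) * ((j:ℂ)+3/2) ≠ 0 := by
            refine mul_ne_zero (fun h => hb2 (by linear_combination h/2)) (fun h => ?_)
            exact stmt6_odd_ne (j+1) (by push_cast; linear_combination 2*h)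
          exact sub_eq_zero.mp ((mul_eq_zero.mp h0).resolve_left hnz)
      · exact most' k hk
    · intro k
      exact most k (fun hzero => hex ⟨k+1, by push_cast; linear_combination hzero⟩)
  -- step 3: going down one row
  have step_down : ∀ j : ℤ, (∀ k, A j k = A j (k+1)) → ∀ k, A (j-1) k = A (j-1) (k+1) := by
    intro j hrow
    have most : ∀ k : ℤ, (a - (k:ℂ) + b) ≠ 0 → A (j-1) k = A (j-1) (k+1) := by
      intro k hnz
      have h := stmt6_LD hA (j-1) k
      rw [show j-1+1 = j by ring] at h
      push_cast at h
      have hr : A j (k-1) = A j k := by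
        have h2 := hrow (k-1); rw [show k-1+1 = k by ring] at h2; exact h2
      have h0 : ((3:ℂ)/2 + ((j:ℂ)-1)) * ((a - (k:ℂ) + b) * (A (j-1) k - A (j-1) (k+1))) = 0 := by
        linear_combination h - ((1:ℂ)/2 - ((j:ℂ)-1))*(a - (k:ℂ) - b)*hr
      have hh : ((3:ℂ)/2 + ((j:ℂ)-1)) ≠ 0 := fun h' =>
        stmt6_odd_ne j (by linear_combination 2*h')
      exact sub_eq_zero.mp ((mul_eq_zero.mp ((mul_eq_zero.mp h0).resolve_left hh)).resolve_left hnz)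
    by_cases hex : ∃ m : ℤ, a + b = (m:ℂ)
    · obtain ⟨m, hm⟩ := hex
      have most' : ∀ k : ℤ, k ≠ m → A (j-1) k = A (j-1) (k+1) := by
        intro k hk
        refine most k (fun hzero => hk ?_)
        have h2 : ((m - k : ℤ):ℂ) = 0 := by push_cast; linear_combination hzero - hm
        have h3 : (m - k : ℤ) = 0 := by exact_mod_cast h2
        omega
      intro k
      rcases eq_or_ne k m with hk|hk
      · rw [hk]
        have hnext : A (j-1) (m+1) = A (j-1) (m+2) := by
          have h2 := most' (m+1) (by omega)
          rw [show m+1+1 = m+2 by ring] at h2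
          exact h2
        by_cases hb2 : b = -(1/2)
        · have hx := stmt6_LX hA (j-1) m
          have ha2 : a = (m:ℂ) + 1/2 := by rw [hb2] at hm; linear_combination hm
          rw [ha2, hb2] at hx
          push_cast at hx
          have h0 : (-((2*(j:ℂ)-3)^2*(2*(j:ℂ)-1))/16) * (A (j-1) m - A (j-1) (m+1)) = 0 := by
            linear_combination hx + ((2*(j:ℂ)-3)^2*(2*(j:ℂ)-1)/16)*hnext
          have hnz : (-((2*(j:ℂ)-3)^2*(2*(j:ℂ)-1))/16) ≠ 0 := by
            have o1 : (2*(j:ℂ)-3) ≠ 0 := fun h =>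
              stmt6_odd_ne (j-2) (by push_cast; linear_combination h)
            have o2 : (2*(j:ℂ)-1) ≠ 0 := fun h =>
              stmt6_odd_ne (j-1) (by push_cast; linear_combination h)
            exact fun h => (mul_ne_zero (pow_ne_zero 2 o1) o2) (by linear_combination (-16:ℂ)*h)
          exact sub_eq_zero.mp ((mul_eq_zero.mp h0).resolve_left hnz)
        · have hf := stmt6_LF hA (j-1) m
          push_cast at hf
          rw [show a = (m:ℂ) - b by linear_combination hm] at hf
          have h0 : ((2*b+1) * ((j:ℂ) - 3/2)) * (A (j-1) m - A (j-1) (m+1)) = 0 := by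
            linear_combination hf + (2*b + (j:ℂ) + 3/2)*hnext
          have hnz : (2*b+1) * ((j:ℂ)-3/2) ≠ 0 := by
            refine mul_ne_zero (fun h => hb2 (by linear_combination h/2)) (fun h => ?_)
            exact stmt6_odd_ne (j-2) (by push_cast; linear_combination 2*h)
          exact sub_eq_zero.mp ((mul_eq_zero.mp h0).resolve_left hnz)
      · exact most' k hk
    · intro k
      exact most k (fun hzero => hex ⟨k, by linear_combination hzero⟩)
  -- step 4: all rows are constant
  have rows : ∀ j : ℤ, ∀ k, A j k = A j (k+1) := by
    intro j
    induction j using Int.induction_on with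
    | zero =>
      have h := step_down 1 row1
      norm_num at h
      exact h
    | succ i ih => exact step_up i ih
    | pred i ih => exact step_down (-i) ih
  -- step 5: columns are constant
  have cols : ∀ j k : ℤ, A (j+1) k = A j k := by
    intro j k
    have h := stmt6_LA1 hA j k
    have h0 : ((1:ℂ)/2 - (j:ℂ)) * (A (j+1) k - A j k) = 0 := by
      linear_combination h + (a - (k:ℂ) + b) * (rows j k)
    exact sub_eq_zero.mp ((mul_eq_zero.mp h0).resolve_left (stmt6_half_ne j))
  refine ⟨A 0 0, fun i k => ?_⟩
  have hvert : ∀ i k : ℤ, A i k = A 0 k := by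
    intro i k
    induction i using Int.induction_on with
    | zero => rfl
    | succ n ih => rw [cols n k]; exact ih
    | pred n ih =>
      have h := cols (-n-1) k
      rw [show (-(n:ℤ)-1+1) = -n by ring] at h
      rw [← h]; exact ih
  have hhor : ∀ k : ℤ, A 0 k = A 0 0 := by
    intro k
    induction k using Int.induction_on with
    | zero => rfl
    | succ n ih => rw [← rows 0 n]; exact ih
    | pred n ih =>
      have h := rows 0 (-n-1)
      rw [show (-(n:ℤ)-1+1) = -n by ring] at h
      rw [h]; exact ih
  exact (hvert i k).trans (hhor k)
end

section
/- Let a, b ∈ ℂ, set b′ = −(b + 1/2), and let A : ℤ × ℤ → ℂ satisfy (i/2 − j)·A(i + j, k) = (a − (k + j) + i·b′)·A(j, k) − (a − k + i·b)·A(j, i + k) for all i, j, k ∈ ℤ. Then A(−j, k) = A(j, k) for all j, k ∈ ℤ. -/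
/-!
Write `c = a - k`. The instances of the relation at `(i, j, k) = (-2j, j, k)`, `(-2j, -j, k)`
(whose left-hand side vanishes) and `(2j, -j, k - 2j)` involve only `A(±j, k)` and `A(±j, k - 2j)`;
eliminating the latter two leaves `2j (c + 2jb) (A(-j, k) - A(j, k)) = 0`. Replacing `j` by `-j`
gives the same with `c - 2jb`. If both `c ± 2jb` vanish, the instances at `(-2j, j, k)` and
`(2j, -j, k)` alone give `2j A(∓j, k) = 0`.
-/

namespace IntertwiningRel

variable {a b : ℂ} {A : ℤ → ℤ → ℂ}

theorem apply_neg_eq_of_ne_zero (hA : IntertwiningRel a b (-(b + 1/2)) A) {j : ℤ} (k : ℤ)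
    (hj : j ≠ 0) (h : a - k + 2 * j * b ≠ 0) : A (-j) k = A j k := by
  have e₁ := hA (-2 * j) j k
  have e₂ := hA (-2 * j) (-j) k
  have e₃ := hA (2 * j) (-j) (-2 * j + k)
  rw [show -2 * j + j = -j by ring] at e₁
  rw [show 2 * j + -j = j by ring, show 2 * j + (-2 * j + k) = k by ring] at e₃
  push_cast at e₁ e₂ e₃
  have key : (2 * j * (a - k + 2 * j * b)) * (A (-j) k - A j k) = 0 := by
    linear_combination 2 * (j : ℂ) * e₁ - (a - k + 2 * j - 2 * j * b) * e₂
      - (a - k - 2 * j * b) * e₃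
  have hne : (2 * j * (a - k + 2 * j * b) : ℂ) ≠ 0 :=
    mul_ne_zero (mul_ne_zero two_ne_zero (Int.cast_ne_zero.mpr hj)) h
  exact sub_eq_zero.mp ((mul_eq_zero.mp key).resolve_left hne)

theorem apply_eq_zero_of_coeffs_eq_zero (hA : IntertwiningRel a b (-(b + 1/2)) A) {j : ℤ}
    (k : ℤ) (hj : j ≠ 0) (hplus : a - k + 2 * j * b = 0) (hminus : a - k - 2 * j * b = 0) :
    A (-j) k = 0 ∧ A j k = 0 := by
  have e₁ := hA (-2 * j) j k
  have e₂ := hA (2 * j) (-j) k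
  rw [show -2 * j + j = -j by ring] at e₁
  rw [show 2 * j + -j = j by ring] at e₂
  push_cast at e₁ e₂
  have h2j : (2 * j : ℂ) ≠ 0 := mul_ne_zero two_ne_zero (Int.cast_ne_zero.mpr hj)
  constructor
  · refine (mul_eq_zero.mp (?_ : (2 * j : ℂ) * A (-j) k = 0)).resolve_left h2j
    linear_combination -e₁ - A j k * hplus + A j (-2 * j + k) * hminus
  · refine (mul_eq_zero.mp (?_ : (2 * j : ℂ) * A j k = 0)).resolve_left h2j
    linear_combination e₂ + A (-j) k * hminus - A (-j) (2 * j + k) * hplus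

end IntertwiningRel

theorem stmt_7 (a b b' : ℂ) (hb' : b' = -(b + 1/2)) (A : ℤ → ℤ → ℂ)
    (hA : IntertwiningRel a b b' A) :
    ∀ j k : ℤ, A (-j) k = A j k := by
  subst hb'
  intro j k
  rcases eq_or_ne j 0 with rfl | hj
  · simp
  by_cases hplus : a - k + 2 * j * b = 0
  · by_cases hminus : a - k - 2 * j * b = 0
    · obtain ⟨hneg, hpos⟩ := hA.apply_eq_zero_of_coeffs_eq_zero k hj hplus hminus
      rw [hneg, hpos]
    · have hminus' : a - k + 2 * ((-j : ℤ) : ℂ) * b ≠ 0 := by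
        rwa [Int.cast_neg, mul_neg, neg_mul, ← sub_eq_add_neg]
      simpa using (hA.apply_neg_eq_of_ne_zero k (neg_ne_zero.mpr hj) hminus').symm
  · exact hA.apply_neg_eq_of_ne_zero k hj hplus
end

section
/- Let a ∈ ℂ with a ∉ ℤ, let b = −1 and b′ = 1/2, and let A : ℤ × ℤ → ℂ satisfy (i/2 − j)·A(i + j, k) = (a − (k + j) + i·b′)·A(j, k) − (a − k + i·b)·A(j, i + k) for all i, j, k ∈ ℤ. Then there exists d ∈ ℂ such that A(i, j) = d/(a − j) for all i, j ∈ ℤ. -/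
theorem stmt_10 (a b b' : ℂ) (ha : ∀ n : ℤ, a ≠ (n : ℂ))
    (hb : b = -1) (hb' : b' = 1/2) (A : ℤ → ℤ → ℂ) (hA : IntertwiningRel a b b' A) :
    ∃ d : ℂ, ∀ i j : ℤ, A i j = d / (a - (j : ℂ)) := by
  subst hb hb'
  have hane : ∀ n : ℤ, a - (n : ℂ) ≠ 0 := fun n => sub_ne_zero.mpr (ha n)
  -- step lemma: C(k) = C(k+1) where C(k) = (a-k) A 0 k
  have step : ∀ k : ℤ, (a - (k : ℂ)) * A 0 k = (a - (k : ℂ) - 1) * A 0 (k + 1) := by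
    intro k
    have hP := hA 1 0 k
    have hQ := hA 1 0 (k + 1)
    have hR := hA 2 0 k
    have hS := hA 1 1 k
    have hT := hA (-1) 1 (k + 1)
    have h1 : (1 : ℤ) + (k + 1) = k + 2 := by ring
    have h2 : (2 : ℤ) + k = k + 2 := by ring
    have h3 : (1 : ℤ) + k = k + 1 := by ring
    have h4 : (-1 : ℤ) + (k + 1) = k := by ring
    simp only [add_zero, zero_add, h1, h2, h3, h4, neg_add_cancel] at hP hQ hR hS hT
    push_cast at hP hQ hR hS hT
    have key : 12 * (a - (k : ℂ)) *
        ((a - (k : ℂ)) * A 0 k - (a - (k : ℂ) - 1) * A 0 (k + 1)) = 0 := by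
      set x : ℂ := a - (k : ℂ) with hx
      linear_combination (10 - 14*x) * hP + (-(2*x - 5)) * hQ + (2*x - 5) * hR
        + (2*(2*x - 5)) * hS + (4*x - 5) * hT
    have h12 : (12 : ℂ) * (a - (k : ℂ)) ≠ 0 := mul_ne_zero (by norm_num) (hane k)
    exact sub_eq_zero.mp ((mul_eq_zero.mp key).resolve_left h12)
  set d := a * A 0 0 with hd
  have hC : ∀ k : ℤ, (a - (k : ℂ)) * A 0 k = d := by
    intro k
    induction k using Int.induction_on with
    | zero => simp [hd]
    | succ n ih =>
      have h := step (n : ℤ)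
      push_cast at h ih ⊢
      linear_combination ih - h
    | pred n ih =>
      have h := step (-(n : ℤ) - 1)
      have h5 : (-(n : ℤ) - 1) + 1 = -n := by ring
      rw [h5] at h
      push_cast at h ih ⊢
      linear_combination ih + h
  refine ⟨d, fun i j => ?_⟩
  rcases eq_or_ne i 0 with rfl | hi
  · rw [eq_div_iff (hane j), mul_comm]; exact hC j
  · have h := hA i 0 j
    have hCj := hC j
    have hCij := hC (i + j)
    simp only [add_zero, zero_add] at h
    push_cast at h hCij
    have hic : (i : ℂ) ≠ 0 := Int.cast_ne_zero.mpr hi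
    have key2 : (i : ℂ) / 2 * ((a - (j : ℂ)) * A i j - d) = 0 := by
      linear_combination (a - (j : ℂ)) * h + (a - (j : ℂ) + (i : ℂ)/2) * hCj
        - (a - (j : ℂ)) * hCij
    have hi2 : (i : ℂ) / 2 ≠ 0 := div_ne_zero hic two_ne_zero
    have := sub_eq_zero.mp ((mul_eq_zero.mp key2).resolve_left hi2)
    rw [eq_div_iff (hane j), mul_comm]
    exact this
end

section
/- Let a ∈ ℂ with a ∉ ℤ, let b = −3/2 and b′ = 0, and let A : ℤ × ℤ → ℂ satisfy (i/2 − j)·A(i + j, k) = (a − (k + j) + i·b′)·A(j, k) − (a − k + i·b)·A(j, i + k) for all i, j, k ∈ ℤ. Then there exists d ∈ ℂ such that A(i, j) = d/(a − i − j) for all i, j ∈ ℤ. -/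
theorem stmt_11 (a b b' : ℂ) (ha : ∀ n : ℤ, a ≠ (n : ℂ))
    (hb : b = -(3/2)) (hb' : b' = 0) (A : ℤ → ℤ → ℂ) (hA : IntertwiningRel a b b' A) :
    ∃ d : ℂ, ∀ i j : ℤ, A i j = d / (a - (i : ℂ) - (j : ℂ)) := by
  subst hb hb'
  have hz : ∀ n : ℤ, a - (n : ℂ) ≠ 0 := by
    intro n h
    exact ha n (by linear_combination h)
  -- E1 : from i = -1, j = 1
  have E1 : ∀ k : ℤ, -(3/2) * ((a - (k:ℂ)) * A 0 k)
      = (a - (k:ℂ)) * ((a - 1 - (k:ℂ)) * A 1 k)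
        - (a - (k:ℂ) + 3/2) * ((a - (k:ℂ)) * A 1 (k-1)) := by
    intro k
    have h := hA (-1) 1 k
    rw [show (-1 : ℤ) + k = k - 1 from by ring, show (-1 : ℤ) + 1 = 0 from by ring] at h
    push_cast at h
    linear_combination (a - (k:ℂ)) * h
  -- E3 : from i = 1, j = 0
  have E3 : ∀ k : ℤ, (1/2) * ((a - 1 - (k:ℂ)) * A 1 k)
      = (a - 1 - (k:ℂ)) * ((a - (k:ℂ)) * A 0 k)
        - (a - (k:ℂ) - 3/2) * ((a - 1 - (k:ℂ)) * A 0 (k+1)) := by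
    intro k
    have h := hA 1 0 k
    rw [show (1 : ℤ) + k = k + 1 from by ring, show (1 : ℤ) + 0 = 1 from by ring] at h
    push_cast at h
    linear_combination (a - 1 - (k:ℂ)) * h
  -- periodicity : from i = 2, j = 1
  have P2 : ∀ k : ℤ, (a - 1 - ((k:ℂ) + 2)) * A 1 (k+2) = (a - 1 - (k:ℂ)) * A 1 k := by
    intro k
    have h := hA 2 1 k
    rw [show (2 : ℤ) + k = k + 2 from by ring, show (2 : ℤ) + 1 = 3 from by ring] at h
    push_cast at h
    linear_combination h
  -- step relation for B 1
  have hq : ∀ k : ℤ, (a - 1 - ((k:ℂ) + 1)) * A 1 (k+1) = (a - 1 - (k:ℂ)) * A 1 k := by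
    intro k
    have e1 := E1 k
    have e2 := E1 (k+1)
    have e3 := E3 k
    have e4 := P2 (k-1)
    rw [show k - 1 + 2 = k + 1 from by ring] at e4
    rw [show k + 1 - 1 = k from by ring] at e2
    push_cast at e2 e4
    have key : ((a - (k:ℂ)) * (a - (k:ℂ) - 1))
        * ((a - 1 - ((k:ℂ) + 1)) * A 1 (k+1) - (a - 1 - (k:ℂ)) * A 1 k) = 0 := by
      linear_combination ((a - (k:ℂ) - 1)/2) * e1 - ((a - (k:ℂ) - 3/2)/2) * e2
        - (3/4) * e3 + ((a - (k:ℂ) - 1) * (a - (k:ℂ) + 3/2)/2) * e4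
    have hx1 : a - (k:ℂ) ≠ 0 := hz k
    have hx2 : a - (k:ℂ) - 1 ≠ 0 := by
      have h := hz (k+1); push_cast at h
      intro hc; exact h (by linear_combination hc)
    have := (mul_eq_zero.mp key).resolve_left (mul_ne_zero hx1 hx2)
    exact sub_eq_zero.mp this
  -- B 1 is constant
  have hconst : ∀ k : ℤ, (a - 1 - (k:ℂ)) * A 1 k = (a - 1) * A 1 0 := by
    intro k
    induction k using Int.induction_on with
    | zero => norm_num
    | succ n ih =>
      have h := hq n
      push_cast at h ih ⊢
      linear_combination h + ih
    | pred n ih =>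
      have h := hq (-(n:ℤ) - 1)
      rw [show -(n:ℤ) - 1 + 1 = -n from by ring] at h
      push_cast at h ih ⊢
      linear_combination ih - h
  -- B 0 is the same constant
  have hB0 : ∀ k : ℤ, (a - (k:ℂ)) * A 0 k = (a - 1) * A 1 0 := by
    intro k
    have e1 := E1 k
    have c1 := hconst k
    have c2 := hconst (k-1)
    push_cast at c2
    linear_combination (-(2:ℂ)/3) * e1 - (2/3) * (a - (k:ℂ)) * c1
      + (2/3) * (a - (k:ℂ) + 3/2) * c2
  -- B i k is the same constant for all i, k
  have hBi : ∀ i k : ℤ, (a - (i:ℂ) - (k:ℂ)) * A i k = (a - 1) * A 1 0 := by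
    intro i k
    rcases eq_or_ne i 0 with rfl | hi
    · have h := hB0 k
      push_cast
      linear_combination h
    · have h := hA i 0 k
      simp only [add_zero] at h
      have e0 := hB0 k
      have e1 := hB0 (i + k)
      push_cast at h e0 e1
      have hi2 : (i:ℂ)/2 ≠ 0 := div_ne_zero (Int.cast_ne_zero.mpr hi) two_ne_zero
      apply mul_left_cancel₀ hi2
      linear_combination (a - (i:ℂ) - (k:ℂ)) * h + (a - (i:ℂ) - (k:ℂ)) * e0
        - (a - (k:ℂ) - 3 * (i:ℂ)/2) * e1
  refine ⟨(a - 1) * A 1 0, fun i j => ?_⟩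
  have h := hBi i j
  have hz' : a - (i:ℂ) - (j:ℂ) ≠ 0 := by
    have hn := hz (i + j); push_cast at hn
    intro hc; exact hn (by linear_combination hc)
  rw [eq_div_iff hz']
  linear_combination h
end

section
/- Let L_i, H_i, G_i⁺, G_i⁻ (i ∈ ℤ) be the operators of RA_{0,−1} on V, i.e. L_i x_j = −(i + j)·x_{i+j}, L_i y_j = −(i/2 + j)·y_{i+j}, H_i x_j = 0, H_i y_j = y_{i+j}, G_i⁻ x_j = 0, G_i⁺ y_j = 0, G_i⁺ x_j = y_{i+j}, G_i⁻ y_j = −2(i + j)·x_{i+j}. Then the ℂ-subspace W of V spanned by {x_k : k ∈ ℤ, k ≠ 0} ∪ {y_j : j ∈ ℤ} is a proper nonzero subspace invariant under every L_i, H_i, G_i⁺, and G_i⁻ (i ∈ ℤ). In particular, the module RA_{0,−1} of the Ramond N=2 superconformal algebra is reducible. -/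
noncomputable section

/-- The underlying space of the intermediate-series modules: two copies of `ℤ →₀ ℂ`. -/
abbrev V : Type := (ℤ →₀ ℂ) × (ℤ →₀ ℂ)

/-- The basis vectors `x j`. -/
def x (j : ℤ) : V := (Finsupp.single j 1, 0)

/-- The basis vectors `y j`. -/
def y (j : ℤ) : V := (0, Finsupp.single j 1)

/-- The subspace of `V` spanned by `{x k : k ≠ 0} ∪ {y j : j ∈ ℤ}`. -/
def W : Submodule ℂ V := Submodule.span ℂ ((x '' {k : ℤ | k ≠ 0}) ∪ Set.range y)

/-! The only basis vector missing from `W` is `x 0`, and every operator of `RA_{0,-1}` that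
could produce `x 0` does so with a coefficient vanishing at index `0`. -/

lemma x_mem_W {k : ℤ} (hk : k ≠ 0) : x k ∈ W :=
  Submodule.subset_span (Or.inl ⟨k, hk, rfl⟩)

lemma y_mem_W (j : ℤ) : y j ∈ W :=
  Submodule.subset_span (Or.inr ⟨j, rfl⟩)

lemma intCast_mul_smul_x_mem_W (n : ℤ) (c : ℂ) : ((n : ℂ) * c) • x n ∈ W := by
  obtain rfl | hn := eq_or_ne n 0
  · simp
  · exact W.smul_mem _ (x_mem_W hn)

lemma map_mem_W {T : V →ₗ[ℂ] V} (hx : ∀ k : ℤ, k ≠ 0 → T (x k) ∈ W)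
    (hy : ∀ j : ℤ, T (y j) ∈ W) {v : V} (hv : v ∈ W) : T v ∈ W := by
  have hle : W ≤ W.comap T := by
    refine Submodule.span_le.2 ?_
    rintro _ (⟨k, hk, rfl⟩ | ⟨j, rfl⟩)
    exacts [hx k hk, hy j]
  exact hle hv

lemma fst_apply_zero_of_mem_W {v : V} (hv : v ∈ W) : v.1 0 = 0 := by
  let f : V →ₗ[ℂ] ℂ := (Finsupp.lapply 0).comp (LinearMap.fst ℂ (ℤ →₀ ℂ) (ℤ →₀ ℂ))
  have hker : W ≤ LinearMap.ker f := by
    refine Submodule.span_le.2 ?_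
    rintro _ (⟨k, hk, rfl⟩ | ⟨j, rfl⟩)
    · simp [f, x, Ne.symm hk]
    · simp [f, y]
  exact hker hv

lemma x_zero_notMem_W : x 0 ∉ W := fun h => by
  simpa [x] using fst_apply_zero_of_mem_W h

lemma W_ne_bot : W ≠ ⊥ := by
  rw [Submodule.ne_bot_iff]
  exact ⟨y 0, y_mem_W 0, by simp [y]⟩

lemma W_ne_top : W ≠ ⊤ :=
  fun h => x_zero_notMem_W (h ▸ Submodule.mem_top)

theorem stmt_19 (L H Gp Gm : ℤ → (V →ₗ[ℂ] V))
    -- the operators of RA_{0,-1}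
    (hLx : ∀ i j : ℤ, L i (x j) = (-((i : ℂ) + (j : ℂ))) • x (i + j))
    (hLy : ∀ i j : ℤ, L i (y j) = (-((i : ℂ) / 2 + (j : ℂ))) • y (i + j))
    (hHx : ∀ i j : ℤ, H i (x j) = 0)
    (hHy : ∀ i j : ℤ, H i (y j) = y (i + j))
    (hGmx : ∀ i j : ℤ, Gm i (x j) = 0)
    (hGpy : ∀ i j : ℤ, Gp i (y j) = 0)
    (hGpx : ∀ i j : ℤ, Gp i (x j) = y (i + j))
    (hGmy : ∀ i j : ℤ, Gm i (y j) = (-(2 * ((i : ℂ) + (j : ℂ)))) • x (i + j)) :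
    W ≠ ⊥ ∧ W ≠ ⊤ ∧
      (∀ i : ℤ, ∀ v ∈ W, L i v ∈ W) ∧
      (∀ i : ℤ, ∀ v ∈ W, H i v ∈ W) ∧
      (∀ i : ℤ, ∀ v ∈ W, Gp i v ∈ W) ∧
      (∀ i : ℤ, ∀ v ∈ W, Gm i v ∈ W) := by
  refine ⟨W_ne_bot, W_ne_top, fun i v => map_mem_W ?_ ?_, fun i v => map_mem_W ?_ ?_,
    fun i v => map_mem_W ?_ ?_, fun i v => map_mem_W ?_ ?_⟩
  · intro k _
    rw [hLx, show -((i : ℂ) + k) = ((i + k : ℤ) : ℂ) * (-1) by push_cast; ring]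
    exact intCast_mul_smul_x_mem_W _ _
  · intro j
    rw [hLy]
    exact W.smul_mem _ (y_mem_W _)
  · intro k _
    rw [hHx]
    exact W.zero_mem
  · intro j
    rw [hHy]
    exact y_mem_W _
  · intro k _
    rw [hGpx]
    exact y_mem_W _
  · intro j
    rw [hGpy]
    exact W.zero_mem
  · intro k _
    rw [hGmx]
    exact W.zero_mem
  · intro j
    rw [hGmy, show -(2 * ((i : ℂ) + j)) = ((i + j : ℤ) : ℂ) * (-2) by push_cast; ring]
    exact intCast_mul_smul_x_mem_W _ _
end
end
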